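/- Let 𝔠 = {C^0,…,C^{M−1}} be an (M,M,N1)-complete complementary code with sequences c^m_n of length N1 and 𝔡 = {D^0,…,D^{M−1}} be an (M,M,N2)-complete complementary code with sequences d^l_n of length N2. For fixed 0 ≤ m ≤ M−1 and each 0 ≤ l ≤ M−1 define the length-M·N1·N2 sequence e^m_l = (c^m_0 ⊗ d^l_0) ∥ (c^m_1 ⊗ d^l_1) ∥ … ∥ (c^m_{M−1} ⊗ d^l_{M−1}). Then E^m = {e^m_0,…,e^m_{M−1}} is a complementary set: Σ_{l=0}^{M−1} C_{e^m_l}(τ) = M²·N1·N2 if τ = 0, and equals 0 for all 1 ≤ τ ≤ M·N1·N2 − 1. -/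

import Mathlib

open Finset

/-- Aperiodic cross-correlation of length-`L` complex sequences at shift `0 ≤ τ`. -/
noncomputable def aCorr (a b : ℕ → ℂ) (L τ : ℕ) : ℂ :=
  ∑ k ∈ Finset.range (L - τ), a k * (starRingEnd ℂ) (b (k + τ))

/-- Periodic cross-correlation of length-`L` complex sequences at shift `τ`. -/
noncomputable def pCorr (a b : ℕ → ℂ) (L τ : ℕ) : ℂ :=
  ∑ k ∈ Finset.range L, a k * (starRingEnd ℂ) (b ((k + τ) % L))

/-- Kronecker product of a sequence `x` (length `N1`) with a sequence `y` of length `N2`: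
`(x ⊗ y) (k*N2 + l) = x k * y l`. -/
noncomputable def kron (x y : ℕ → ℂ) (N2 : ℕ) : ℕ → ℂ :=
  fun n => x (n / N2) * y (n % N2)

/-- The length-`M·N1·N2` sequence `e m l = (c m 0 ⊗ d l 0) ∥ (c m 1 ⊗ d l 1) ∥ ⋯`,
whose entry at position `n·N1·N2 + k·N2 + j` is `c m n k * d l n j`. -/
noncomputable def eSeq (N1 N2 : ℕ) (c d : ℕ → ℕ → ℕ → ℂ) (m l : ℕ) : ℕ → ℂ :=
  fun pos =>
    c m (pos / (N1 * N2)) ((pos % (N1 * N2)) / N2) *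
      d l (pos / (N1 * N2)) ((pos % (N1 * N2)) % N2)


/-! Encode a length-`L` sequence `a` by its generating Laurent polynomial `A(z) = ∑ a_k z^k` and
let `Ã(z) = conj (A (1 / conj z))` (conjugate the coefficients and invert `T`). The coefficient of
`z^(-τ)` in `A·B̃` is the aperiodic correlation `C_{a,b}(τ)`, so a CCC is exactly an `M × M` matrix
`Φ` of Laurent polynomials with `Φ·Φ̃ᵀ = M N·I`; since `M N` is a unit, also `Φ̃ᵀ·Φ = M N·I`, i.e. the
columns of a CCC are orthogonal too.

The generating polynomial of `e^m_l` is `E_l(z) = ∑_n z^(n N1 N2) C_{m,n}(z^N2) D_{l,n}(z)`. In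
`∑_l E_l Ẽ_l` the column orthogonality of `𝔡` kills the cross terms `n ≠ n'`, which leaves
`M N2 · ∑_n C_{m,n}(z^N2) C̃_{m,n}(z^N2) = M N2 · M N1`, a constant. -/

theorem Nat.mul_add_div_of_lt {a b c : ℕ} (h : c < b) : (a * b + c) / b = a := by
  rw [Nat.add_comm, Nat.add_mul_div_right _ _ (by omega), Nat.div_eq_of_lt h, Nat.zero_add]

theorem Matrix.mul_eq_smul_one_comm {n R : Type*} [Fintype n] [DecidableEq n] [CommRing R]
    {A B : Matrix n n R} {w : R} (hw : IsUnit w) (h : A * B = w • 1) : B * A = w • 1 := by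
  obtain ⟨u, rfl⟩ := hw
  have hinv : A * ((↑u⁻¹ : R) • B) = 1 := by
    rw [Matrix.mul_smul, h, smul_smul, Units.inv_mul, one_smul]
  rw [← one_smul R (B * A), ← Units.mul_inv u, mul_smul, ← Matrix.smul_mul,
    mul_eq_one_comm.mp hinv]

theorem Finset.sum_mul_map_sum_of_orthogonal {R ι κ : Type*} [CommSemiring R] [DecidableEq κ]
    (σ : R →+* R) (s : Finset ι) (t : Finset κ) (A : κ → R) (D : ι → κ → R) (w : R)
    (hD : ∀ n ∈ t, ∀ n' ∈ t, ∑ l ∈ s, D l n * σ (D l n') = if n = n' then w else 0) :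
    ∑ l ∈ s, (∑ n ∈ t, A n * D l n) * σ (∑ n ∈ t, A n * D l n) =
      (∑ n ∈ t, A n * σ (A n)) * w := by
  calc ∑ l ∈ s, (∑ n ∈ t, A n * D l n) * σ (∑ n ∈ t, A n * D l n)
      = ∑ n ∈ t, ∑ n' ∈ t, A n * σ (A n') * ∑ l ∈ s, D l n * σ (D l n') := by
        simp only [map_sum, map_mul, sum_mul_sum]
        simp only [mul_sum]
        conv_lhs => rw [sum_comm]
        refine sum_congr rfl fun n _ => ?_
        conv_lhs => rw [sum_comm]
        exact sum_congr rfl fun n' _ => sum_congr rfl fun l _ => by ring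
    _ = ∑ n ∈ t, A n * σ (A n) * w := by
        refine sum_congr rfl fun n hn => ?_
        rw [sum_congr rfl fun n' hn' => by rw [hD n hn n' hn', mul_ite, mul_zero], sum_ite_eq,
          if_pos hn]
    _ = (∑ n ∈ t, A n * σ (A n)) * w := by rw [sum_mul]

namespace LaurentPolynomial

variable {R : Type*}

section Semiring

variable [Semiring R]

noncomputable def genPoly (a : ℕ → R) (L : ℕ) : R[T;T⁻¹] :=
  ∑ k ∈ range L, C (a k) * T k

theorem genPoly_congr {a b : ℕ → R} {L : ℕ} (h : ∀ k < L, a k = b k) :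
    genPoly a L = genPoly b L :=
  sum_congr rfl fun k hk => by rw [h k (mem_range.mp hk)]

theorem genPoly_mul_length (a : ℕ → R) (A B : ℕ) :
    genPoly a (A * B) = ∑ i ∈ range A, T (i * B : ℕ) * genPoly (fun j => a (i * B + j)) B := by
  induction A with
  | zero => simp [genPoly]
  | succ A ih =>
    rw [Nat.succ_mul, genPoly, sum_range_add, ← genPoly, ih, sum_range_succ, genPoly, mul_sum]
    congr 1
    refine sum_congr rfl fun j _ => ?_
    rw [Nat.cast_add, T_add, (commute_T _ _).left_comm]

theorem genPoly_const_mul (r : R) (a : ℕ → R) (L : ℕ) :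
    genPoly (fun j => r * a j) L = C r * genPoly a L := by
  rw [genPoly, genPoly, mul_sum]
  simp only [map_mul, mul_assoc]

theorem coeff_C_mul_T (r : R) (n m : ℤ) : (C r * T n).coeff m = if n = m then r else 0 := by
  rw [← single_eq_C_mul_T, AddMonoidAlgebra.coeff_single, Finsupp.single_apply]

variable (R) in
noncomputable def expand (N : ℕ) : R[T;T⁻¹] →+* R[T;T⁻¹] :=
  AddMonoidAlgebra.mapDomainRingHom R (AddMonoidHom.mulLeft (N : ℤ))

theorem expand_C (N : ℕ) (r : R) : expand R N (C r) = C r := by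
  rw [← single_eq_C, expand, AddMonoidAlgebra.mapDomainRingHom_apply,
    AddMonoidAlgebra.mapDomain_single]
  simp

theorem expand_T (N : ℕ) (n : ℤ) : expand R N (T n) = T (N * n) := by
  rw [T, expand, AddMonoidAlgebra.mapDomainRingHom_apply, AddMonoidAlgebra.mapDomain_single]
  rfl

end Semiring

section StarRing

variable [CommSemiring R] [StarRing R]

noncomputable def conjInvert : R[T;T⁻¹] →+* R[T;T⁻¹] :=
  (invert : R[T;T⁻¹] ≃ₐ[R] R[T;T⁻¹]).toRingHom.comp
    (AddMonoidAlgebra.mapRingHom ℤ (starRingEnd R))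

theorem conjInvert_C (r : R) : conjInvert (C r) = C (star r) := by
  rw [conjInvert, RingHom.comp_apply, ← single_eq_C, AddMonoidAlgebra.mapRingHom_single,
    single_eq_C]
  exact invert_C _

theorem conjInvert_T (n : ℤ) : conjInvert (T n : R[T;T⁻¹]) = T (-n) := by
  rw [conjInvert, RingHom.comp_apply, T, AddMonoidAlgebra.mapRingHom_single, map_one]
  exact invert_T _

theorem coeff_conjInvert (p : R[T;T⁻¹]) (n : ℤ) :
    (conjInvert p).coeff n = star (p.coeff (-n)) := by
  simp [conjInvert, starRingEnd_apply]

theorem conjInvert_conjInvert (p : R[T;T⁻¹]) : conjInvert (conjInvert p) = p := by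
  ext n
  simp [coeff_conjInvert]

theorem conjInvert_expand (N : ℕ) (p : R[T;T⁻¹]) :
    conjInvert (expand R N p) = expand R N (conjInvert p) := by
  induction p using LaurentPolynomial.induction_on' with
  | add p q hp hq => simp only [map_add, hp, hq]
  | C_mul_T n r => simp only [map_mul, conjInvert_C, conjInvert_T, expand_C, expand_T, mul_neg]

theorem coeff_mul_conjInvert (p q : R[T;T⁻¹]) (n : ℤ) :
    (p * conjInvert q).coeff n = star ((q * conjInvert p).coeff (-n)) := by
  rw [← coeff_conjInvert, map_mul, conjInvert_conjInvert, mul_comm]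

theorem genPoly_mul_conjInvert_genPoly (a b : ℕ → R) (L : ℕ) :
    genPoly a L * conjInvert (genPoly b L) =
      ∑ k ∈ range L, ∑ k' ∈ range L, C (a k * star (b k')) * T ((k : ℤ) - k') := by
  simp only [genPoly, map_sum, map_mul, conjInvert_C, conjInvert_T, sum_mul_sum, T_sub]
  refine sum_congr rfl fun k _ => sum_congr rfl fun k' _ => ?_
  ring

end StarRing

theorem coeff_genPoly_mul_conjInvert_neg (a b : ℕ → ℂ) (L τ : ℕ) :
    (genPoly a L * conjInvert (genPoly b L)).coeff (-τ) = aCorr a b L τ := by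
  have hshift : ∀ k k' : ℕ, (k : ℤ) - k' = -τ ↔ k + τ = k' := by omega
  simp only [genPoly_mul_conjInvert_genPoly, AddMonoidAlgebra.coeff_sum,
    Finsupp.finsetSum_apply, coeff_C_mul_T, hshift, sum_ite_eq, mem_range]
  rw [← sum_filter, aCorr]
  congr 1
  ext k
  simp only [mem_filter, mem_range]
  omega

end LaurentPolynomial

section

open LaurentPolynomial

/-- `x k n` is the `n`-th sequence of the `k`-th code `C^k`; all sequences have length `N`. -/
def IsCompleteComplementaryCode (M N : ℕ) (x : ℕ → ℕ → ℕ → ℂ) : Prop :=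
  ∀ m1 < M, ∀ m2 < M, ∀ τ < N,
    ∑ n ∈ range M, aCorr (x m1 n) (x m2 n) N τ = if m1 = m2 ∧ τ = 0 then (M * N : ℂ) else 0

variable {M N : ℕ} {x : ℕ → ℕ → ℕ → ℂ}

theorem aCorr_eq_zero_of_le {a b : ℕ → ℂ} {L τ : ℕ} (h : L ≤ τ) : aCorr a b L τ = 0 := by
  rw [aCorr, Nat.sub_eq_zero_of_le h, sum_range_zero]

theorem IsCompleteComplementaryCode.sum_aCorr (hx : IsCompleteComplementaryCode M N x)
    {m1 m2 : ℕ} (hm1 : m1 < M) (hm2 : m2 < M) (τ : ℕ) :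
    ∑ n ∈ range M, aCorr (x m1 n) (x m2 n) N τ =
      if m1 = m2 ∧ τ = 0 then (M * N : ℂ) else 0 := by
  rcases lt_or_ge τ N with hτ | hτ
  · exact hx m1 hm1 m2 hm2 τ hτ
  · rw [sum_eq_zero fun n _ => aCorr_eq_zero_of_le hτ]
    split_ifs with h
    · obtain rfl : N = 0 := by omega
      simp
    · rfl

theorem IsCompleteComplementaryCode.sum_genPoly_mul_conjInvert
    (hx : IsCompleteComplementaryCode M N x) {m1 m2 : ℕ} (hm1 : m1 < M) (hm2 : m2 < M) :
    ∑ n ∈ range M, genPoly (x m1 n) N * conjInvert (genPoly (x m2 n) N) =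
      if m1 = m2 then C (M * N : ℂ) else 0 := by
  ext t
  simp only [AddMonoidAlgebra.coeff_sum, Finsupp.finsetSum_apply]
  obtain ⟨τ, rfl | rfl⟩ := Int.eq_nat_or_neg t
  · rw [sum_congr rfl fun n _ => coeff_mul_conjInvert _ _ _]
    simp only [coeff_genPoly_mul_conjInvert_neg, ← star_sum, hx.sum_aCorr hm2 hm1]
    obtain rfl | h := eq_or_ne m1 m2
    · rw [if_pos rfl, C_apply]
      split_ifs <;> simp_all
    · simp [h, h.symm]
  · simp only [coeff_genPoly_mul_conjInvert_neg, hx.sum_aCorr hm1 hm2]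
    obtain rfl | h := eq_or_ne m1 m2
    · rw [if_pos rfl, C_apply]
      simp
    · simp [h]

theorem IsCompleteComplementaryCode.sum_genPoly_mul_conjInvert_transpose
    (hx : IsCompleteComplementaryCode M N x) (hN : 0 < N) {n1 n2 : ℕ} (hn1 : n1 < M)
    (hn2 : n2 < M) :
    ∑ l ∈ range M, genPoly (x l n1) N * conjInvert (genPoly (x l n2) N) =
      if n1 = n2 then C (M * N : ℂ) else 0 := by
  let Φ : Matrix (Fin M) (Fin M) ℂ[T;T⁻¹] := Matrix.of fun i j => genPoly (x i j) N
  have hunit : IsUnit (C (M * N : ℂ)) :=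
    (isUnit_iff_ne_zero.mpr (by simp; omega)).map C
  have hrows : Φ * (Φ.map conjInvert).transpose = C (M * N : ℂ) • 1 := by
    refine Matrix.ext fun i j => ?_
    rw [Matrix.mul_apply, Matrix.smul_apply, Matrix.one_apply]
    simp only [Φ, Matrix.of_apply, Matrix.transpose_apply, Matrix.map_apply]
    rw [Fin.sum_univ_eq_sum_range (fun n => genPoly (x i n) N * conjInvert (genPoly (x j n) N)),
      hx.sum_genPoly_mul_conjInvert i.isLt j.isLt]
    rcases eq_or_ne i j with rfl | h
    · simp
    · simp [h, Fin.val_ne_of_ne h]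
  have hcols := congrFun (congrFun (Matrix.mul_eq_smul_one_comm hunit hrows) ⟨n2, hn2⟩) ⟨n1, hn1⟩
  rw [Matrix.mul_apply, Matrix.smul_apply, Matrix.one_apply] at hcols
  simp only [Φ, Matrix.of_apply, Matrix.transpose_apply, Matrix.map_apply, Fin.mk.injEq] at hcols
  rw [Fin.sum_univ_eq_sum_range (fun l => conjInvert (genPoly (x l n2) N) * genPoly (x l n1) N)]
    at hcols
  simp_rw [mul_comm (genPoly _ N), hcols, eq_comm (a := n2), smul_ite, smul_zero, smul_eq_mul,
    mul_one]

theorem genPoly_kron (a b : ℕ → ℂ) (N1 N2 : ℕ) :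
    genPoly (kron a b N2) (N1 * N2) = expand ℂ N2 (genPoly a N1) * genPoly b N2 := by
  rw [genPoly_mul_length, genPoly, map_sum, sum_mul]
  refine sum_congr rfl fun k _ => ?_
  have hblock : ∀ j < N2, kron a b N2 (k * N2 + j) = a k * b j := fun j hj => by
    rw [kron, Nat.mul_add_div_of_lt hj, Nat.mul_add_mod_of_lt hj]
  rw [genPoly_congr hblock, genPoly_const_mul, map_mul, expand_C, expand_T, Nat.cast_mul,
    mul_comm (k : ℤ)]
  ring

theorem eSeq_block (N1 N2 : ℕ) (c d : ℕ → ℕ → ℕ → ℂ) (m l n : ℕ) {i : ℕ} (hi : i < N1 * N2) :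
    eSeq N1 N2 c d m l (n * (N1 * N2) + i) = kron (c m n) (d l n) N2 i := by
  rw [eSeq, kron, Nat.mul_add_div_of_lt hi, Nat.mul_add_mod_of_lt hi]

theorem genPoly_eSeq (M N1 N2 : ℕ) (c d : ℕ → ℕ → ℕ → ℂ) (m l : ℕ) :
    genPoly (eSeq N1 N2 c d m l) (M * N1 * N2) =
      ∑ n ∈ range M, T (n * (N1 * N2) : ℕ) * expand ℂ N2 (genPoly (c m n) N1) *
        genPoly (d l n) N2 := by
  rw [mul_assoc, genPoly_mul_length]
  refine sum_congr rfl fun n _ => ?_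
  rw [genPoly_congr fun i hi => eSeq_block N1 N2 c d m l n hi, genPoly_kron, mul_assoc]

theorem sum_genPoly_eSeq_mul_conjInvert {N1 N2 : ℕ} {c d : ℕ → ℕ → ℕ → ℂ}
    (hc : IsCompleteComplementaryCode M N1 c) (hd : IsCompleteComplementaryCode M N2 d)
    (hN2 : 0 < N2) {m : ℕ} (hm : m < M) :
    ∑ l ∈ range M, genPoly (eSeq N1 N2 c d m l) (M * N1 * N2) *
        conjInvert (genPoly (eSeq N1 N2 c d m l) (M * N1 * N2)) =
      C (M ^ 2 * N1 * N2 : ℂ) := by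
  simp only [genPoly_eSeq]
  rw [sum_mul_map_sum_of_orthogonal conjInvert (range M) (range M) _
    (fun l n => genPoly (d l n) N2) (C (M * N2 : ℂ))
    fun n hn n' hn' => hd.sum_genPoly_mul_conjInvert_transpose hN2 (mem_range.1 hn)
      (mem_range.1 hn')]
  have hshift : ∀ n, T (n * (N1 * N2) : ℕ) * expand ℂ N2 (genPoly (c m n) N1) *
      conjInvert (T (n * (N1 * N2) : ℕ) * expand ℂ N2 (genPoly (c m n) N1)) =
      expand ℂ N2 (genPoly (c m n) N1 * conjInvert (genPoly (c m n) N1)) := fun n => by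
    rw [map_mul, conjInvert_T, conjInvert_expand, map_mul, mul_mul_mul_comm, ← T_add,
      add_neg_cancel, T_zero, one_mul]
  rw [sum_congr rfl fun n _ => hshift n, ← map_sum, hc.sum_genPoly_mul_conjInvert hm hm,
    if_pos rfl, expand_C, ← map_mul]
  congr 1
  ring

end

theorem statement17_general (M N1 N2 : ℕ)
    (c d : ℕ → ℕ → ℕ → ℂ)
    (hCCCc : ∀ m1 < M, ∀ m2 < M, ∀ τ < N1,
      ∑ n ∈ Finset.range M, aCorr (c m1 n) (c m2 n) N1 τ =
        if m1 = m2 ∧ τ = 0 then (M * N1 : ℂ) else 0)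
    (hCCCd : ∀ l1 < M, ∀ l2 < M, ∀ τ < N2,
      ∑ n ∈ Finset.range M, aCorr (d l1 n) (d l2 n) N2 τ =
        if l1 = l2 ∧ τ = 0 then (M * N2 : ℂ) else 0) :
    ∀ m < M, ∀ τ < M * N1 * N2,
      ∑ l ∈ Finset.range M,
        aCorr (eSeq N1 N2 c d m l) (eSeq N1 N2 c d m l) (M * N1 * N2) τ =
        if τ = 0 then (M ^ 2 * N1 * N2 : ℂ) else 0 := by
  intro m hm τ hτ
  have hN2 : 0 < N2 := Nat.pos_of_ne_zero fun h => by simp [h] at hτ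
  have hcoeff := congrArg (fun p => p.coeff (-τ : ℤ))
    (sum_genPoly_eSeq_mul_conjInvert hCCCc hCCCd hN2 hm)
  simp only [AddMonoidAlgebra.coeff_sum, Finsupp.finsetSum_apply,
    LaurentPolynomial.coeff_genPoly_mul_conjInvert_neg, LaurentPolynomial.C_apply] at hcoeff
  rw [hcoeff]
  simp

theorem statement17 (M N1 N2 : ℕ) (hM : 0 < M) (hN1 : 0 < N1) (hN2 : 0 < N2)
    (c d : ℕ → ℕ → ℕ → ℂ)
    (hCCCc : ∀ m1 < M, ∀ m2 < M, ∀ τ < N1,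
      ∑ n ∈ Finset.range M, aCorr (c m1 n) (c m2 n) N1 τ =
        if m1 = m2 ∧ τ = 0 then (M * N1 : ℂ) else 0)
    (hCCCd : ∀ l1 < M, ∀ l2 < M, ∀ τ < N2,
      ∑ n ∈ Finset.range M, aCorr (d l1 n) (d l2 n) N2 τ =
        if l1 = l2 ∧ τ = 0 then (M * N2 : ℂ) else 0) :
    ∀ m < M, ∀ τ < M * N1 * N2,
      ∑ l ∈ Finset.range M,
        aCorr (eSeq N1 N2 c d m l) (eSeq N1 N2 c d m l) (M * N1 * N2) τ =
        if τ = 0 then (M ^ 2 * N1 * N2 : ℂ) else 0 :=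
  statement17_general M N1 N2 c d hCCCc hCCCd
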